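/- arXiv:2311.17793 — 2 statements merged into one kernel-verified Lean document; each statement's English description precedes it below -/
import Mathlib

section
/- Let P be an LR-vine and a, b nodes of P. If U_a ⊆ U_b then a ≤ b, where U_x denotes the set of minimal elements below x. Consequently, if U_a = U_b then a = b. -/
/-- The `i`-th associated graph of a graded poset: vertices are the elements of rank `i`,
with `a` and `b` adjacent when they are (distinct, of rank `i` and) covered by a common
element (which then has cover-set `{a, b}`). -/
def coverGraph {P : Type*} [PartialOrder P] (rk : P → ℕ) (i : ℕ) : SimpleGraph P where
  Adj a b := a ≠ b ∧ rk a = i ∧ rk b = i ∧ ∃ v : P, a ⋖ v ∧ b ⋖ v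
  symm := ⟨by
    rintro a b ⟨hne, ha, hb, v, h1, h2⟩
    exact ⟨hne.symm, hb, ha, v, h2, h1⟩⟩
  loopless := ⟨by rintro a ⟨hne, -⟩; exact hne rfl⟩

/-- A vine: a finite graded poset (with rank function `rk`, minimal elements of rank 1)
in which every non-minimal node covers exactly two nodes, any two distinct nodes of the
same rank are covered by at most one common node, and each associated graph is a
forest. -/
structure IsVine {P : Type*} [PartialOrder P] [Finite P] (rk : P → ℕ) : Prop where
  rk_strictMono : ∀ x y : P, x < y → rk x < rk y
  rk_covBy : ∀ x y : P, x ⋖ y → rk y = rk x + 1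
  rk_min : ∀ x : P, IsMin x → rk x = 1
  covers_two : ∀ v : P, ¬ IsMin v → {a : P | a ⋖ v}.ncard = 2
  cover_unique : ∀ a b : P, a ≠ b → rk a = rk b →
    ∀ v w : P, a ⋖ v → b ⋖ v → a ⋖ w → b ⋖ w → v = w
  forest : ∀ i : ℕ, (coverGraph rk i).IsAcyclic

/-- The rank of a graded poset: the largest rank of an element. -/
noncomputable def vineRank {P : Type*} (rk : P → ℕ) : ℕ := sSup (Set.range rk)

/-- The proximity condition: any two distinct nodes of the same rank `≥ 2` that are
covered by a common node themselves cover a common node. -/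
def Proximity {P : Type*} [PartialOrder P] (rk : P → ℕ) : Prop :=
  ∀ a b : P, a ≠ b → rk a = rk b → 2 ≤ rk a →
    (∃ v : P, a ⋖ v ∧ b ⋖ v) → ∃ c : P, c ⋖ a ∧ c ⋖ b

/-- A regular vine (R-vine): a vine whose rank equals its dimension (the number of
minimal elements), whose associated forests (for `1 ≤ i ≤ rank`) are trees, and
which satisfies the proximity condition. -/
structure IsRVine {P : Type*} [PartialOrder P] [Finite P] (rk : P → ℕ)
    extends IsVine rk : Prop where
  rank_eq_dim : vineRank rk = {x : P | IsMin x}.ncard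
  tree : ∀ i : ℕ, 1 ≤ i → i ≤ vineRank rk →
    ((coverGraph rk i).induce {x : P | rk x = i}).Connected
  proximity : Proximity rk

/-- A locally regular vine (LR-vine): a vine all of whose principal ideals
(with the induced order and rank) are R-vines. -/
def IsLRVine {P : Type*} [PartialOrder P] [Finite P] (rk : P → ℕ) : Prop :=
  IsVine rk ∧ ∀ v : P, IsRVine (P := {x : P // x ≤ v}) (fun x => rk x.val)

/-- The complete union of a node: the set of minimal elements below it. -/
def completeUnion {P : Type*} [PartialOrder P] (a : P) : Set P :=
  {x : P | IsMin x ∧ x ≤ a}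

/-- The conditioned set of a (non-minimal) node `v`: the minimal elements lying below
exactly one of the two nodes covered by `v` (the symmetric difference of the complete
unions of the two covered nodes). -/
def conditionedSet {P : Type*} [PartialOrder P] (v : P) : Set P :=
  {m : P | IsMin m ∧ ∃! a : P, a ⋖ v ∧ m ≤ a}

/-!
Induct on `a`. If `a` is not minimal, its two children `a₁, a₂` lie below `b` by induction.
The ideal below `b` is an R-vine, so its associated graph in the rank `k` of `a₁, a₂` is a
tree and joins them by a path. That path is also a path in the associated forest of `P`,
where `a₁ — a₂` is already an edge (through `a`); paths in a forest are unique, so `a₁, a₂`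
have a common cover `w ≤ b`, and `w = a` because common covers are unique.
-/

namespace SimpleGraph

theorem IsAcyclic.adj_of_reachable {V W : Type*} {H : SimpleGraph V} {G : SimpleGraph W}
    (hG : G.IsAcyclic) (f : H →g G) (hf : Function.Injective f) {u v : V}
    (huv : H.Reachable u v) (hadj : G.Adj (f u) (f v)) : H.Adj u v := by
  classical
  obtain ⟨p⟩ := huv
  have hsingle : p.toPath.map f hf = Path.singleton hadj := (hG.subsingleton_path _ _).elim _ _
  have hlen : p.toPath.val.length = 1 := by
    simpa [Path.singleton] using congrArg (fun q : G.Path _ _ => q.val.length) hsingle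
  exact Walk.adj_of_length_eq_one hlen

end SimpleGraph

section

variable {P : Type*} [PartialOrder P]

theorem CovBy.val_covBy_val {b : P} {x y : {z : P // z ≤ b}} (h : x ⋖ y) : x.val ⋖ y.val :=
  ⟨h.lt, fun z hxz hzy => h.2 (c := ⟨z, hzy.le.trans y.2⟩) hxz hzy⟩

def coverGraphIicHom (rk : P → ℕ) (b : P) (i : ℕ) :
    coverGraph (fun x : {z : P // z ≤ b} => rk x) i →g coverGraph rk i where
  toFun := Subtype.val
  map_rel' := fun ⟨hne, hx, hy, v, hxv, hyv⟩ =>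
    ⟨Subtype.val_injective.ne hne, hx, hy, v, hxv.val_covBy_val, hyv.val_covBy_val⟩

variable [Finite P] {rk : P → ℕ}

theorem IsVine.one_le_rk (h : IsVine rk) (x : P) : 1 ≤ rk x := by
  by_cases hx : IsMin x
  · exact (h.rk_min x hx).ge
  · obtain ⟨y, hy⟩ : {a : P | a ⋖ x}.Nonempty :=
      Set.nonempty_of_ncard_ne_zero (by rw [h.covers_two x hx]; decide)
    rw [h.rk_covBy y x hy]
    omega

theorem IsVine.exists_covBy_pair (h : IsVine rk) {a : P} (ha : ¬ IsMin a) :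
    ∃ a₁ a₂, a₁ ≠ a₂ ∧ a₁ ⋖ a ∧ a₂ ⋖ a := by
  obtain ⟨a₁, a₂, hne, hset⟩ := Set.ncard_eq_two.mp (h.covers_two a ha)
  have h₁ : a₁ ∈ {x : P | x ⋖ a} := hset ▸ Set.mem_insert a₁ {a₂}
  have h₂ : a₂ ∈ {x : P | x ⋖ a} := hset ▸ Set.mem_insert_of_mem a₁ rfl
  exact ⟨a₁, a₂, hne, h₁, h₂⟩

theorem IsLRVine.le_of_covBy_of_covBy (h : IsLRVine rk) {a a₁ a₂ b : P} (hne : a₁ ≠ a₂)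
    (h₁ : a₁ ⋖ a) (h₂ : a₂ ⋖ a) (hb₁ : a₁ ≤ b) (hb₂ : a₂ ≤ b) : a ≤ b := by
  set k := rk a₁
  have hk₂ : rk a₂ = k := by
    have := h.1.rk_covBy _ _ h₁
    have := h.1.rk_covBy _ _ h₂
    omega
  have hk : k ≤ vineRank (fun x : {z : P // z ≤ b} => rk x) :=
    le_csSup (Set.finite_range _).bddAbove ⟨⟨a₁, hb₁⟩, rfl⟩
  let s : Set {z : P // z ≤ b} := {x | rk x = k}
  have hreach : ((coverGraph (fun x : {z : P // z ≤ b} => rk x) k).induce s).Reachable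
      ⟨⟨a₁, hb₁⟩, rfl⟩ ⟨⟨a₂, hb₂⟩, hk₂⟩ :=
    ((h.2 b).tree k (h.1.one_le_rk a₁) hk).preconnected _ _
  have hinj : Function.Injective
      ((coverGraphIicHom rk b k).comp (SimpleGraph.Embedding.induce s).toHom) :=
    Subtype.val_injective.comp Subtype.val_injective
  obtain ⟨-, -, -, w, hw₁, hw₂⟩ :=
    (h.1.forest k).adj_of_reachable _ hinj hreach ⟨hne, rfl, hk₂, a, h₁, h₂⟩
  rw [h.1.cover_unique a₁ a₂ hne hk₂.symm a w h₁ h₂ hw₁.val_covBy_val hw₂.val_covBy_val]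
  exact w.2

theorem IsLRVine.le_of_completeUnion_subset (h : IsLRVine rk) {a b : P}
    (hab : completeUnion a ⊆ completeUnion b) : a ≤ b := by
  induction a using WellFoundedLT.induction with
  | ind a ih =>
  by_cases ha : IsMin a
  · exact (hab ⟨ha, le_rfl⟩).2
  obtain ⟨a₁, a₂, hne, h₁, h₂⟩ := h.1.exists_covBy_pair ha
  have hb : ∀ c, c ⋖ a → c ≤ b := fun c hc =>
    ih c hc.lt fun m hm => hab ⟨hm.1, hm.2.trans hc.le⟩
  exact h.le_of_covBy_of_covBy hne h₁ h₂ (hb a₁ h₁) (hb a₂ h₂)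

end

/-- In an LR-vine, if the complete union of `a` is contained in that of `b` then
`a ≤ b`; consequently, equal complete unions force equal nodes. -/
theorem completeUnion_subset_imp_le {P : Type*} [PartialOrder P] [Finite P]
    (rk : P → ℕ) (h : IsLRVine rk) (a b : P) :
    (completeUnion a ⊆ completeUnion b → a ≤ b) ∧
    (completeUnion a = completeUnion b → a = b) :=
  ⟨h.le_of_completeUnion_subset, fun he =>
    (h.le_of_completeUnion_subset he.subset).antisymm (h.le_of_completeUnion_subset he.superset)⟩
end

section
/- Let P be an R-vine of dimension ℓ. Then for every pair of distinct minimal elements i, j, there exists exactly one non-minimal node v of P whose conditioned set is {i, j}; i.e., the map v ↦ C_v is a bijection from the non-minimal nodes of P to the 2-element subsets of min(P). -/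
/-!
Write `U x` for the complete union of `x`. Proximity, together with the forest condition one
level down, forces every tree path between two parents of a node `y` to run through parents
of `y`. Lifting level by level, the nodes of a fixed rank lying above a minimal element `m`
span a connected subtree. As the level graphs are forests, two distinct nodes `a, b` with a
common child `c` then satisfy `U a ∩ U b = U c`; hence `|U v| = rk v` by induction, and
`|U a \ U b| = 1` for two children `a, b` of one node, so every conditioned set is a pair.

A node has conditioned set `{i, j}` iff it is a minimal upper bound of `i` and `j`. Such a
bound exists below a node of top rank, whose complete union is everything by counting. Two
minimal upper bounds `u, v` coincide: climbing from the lower one gives an upper bound `z` of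
the rank of `v`; if `z ≠ v`, the subtrees above `i` and above `j` contain the same tree path
from `v` to `z`, and its first edge yields a common child of `v` and a neighbour that lies
above both `i` and `j`, contradicting minimality.
-/

open SimpleGraph
open scoped symmDiff

namespace SimpleGraph.IsAcyclic

variable {V : Type*} {G : SimpleGraph V}

lemma mem_edges_of_adj (hG : G.IsAcyclic) {u v : V} (huv : G.Adj u v) (p : G.Walk u v) :
    s(u, v) ∈ p.edges :=
  isBridge_iff_forall_walk_mem_edges.1 (isAcyclic_iff_forall_adj_isBridge.1 hG huv) p

lemma mem_support_of_adj_of_adj (hG : G.IsAcyclic) {u v w : V} (huv : G.Adj u v)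
    (hvw : G.Adj v w) (huw : u ≠ w) (p : G.Walk u w) : v ∈ p.support := by
  have he := hG.mem_edges_of_adj huv (p.concat hvw.symm)
  rw [Walk.edges_concat, List.concat_eq_append, List.mem_append, List.mem_singleton] at he
  rcases he with he | he
  · exact p.snd_mem_support_of_mem_edges he
  · exact absurd (by simpa [huv.ne] using he) huw

end SimpleGraph.IsAcyclic

section

variable {P : Type*} [PartialOrder P]

lemma not_isMin_of_le_of_le {i j v : P} (hij : i ≠ j) (hiv : i ≤ v) (hjv : j ≤ v) :
    ¬ IsMin v :=
  fun hv => hij ((le_antisymm hiv (hv hiv)).trans (le_antisymm hjv (hv hjv)).symm)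

lemma IsMin.exists_le_covBy [Finite P] {m v : P} (hm : IsMin m) (hmv : m ≤ v)
    (hv : ¬ IsMin v) : ∃ d, m ≤ d ∧ d ⋖ v :=
  exists_le_covBy_of_lt (hmv.lt_of_ne (by rintro rfl; exact hv hm))

lemma completeUnion_of_isMin {m : P} (hm : IsMin m) : completeUnion m = {m} := by
  ext x
  exact ⟨fun ⟨_, hxm⟩ => le_antisymm hxm (hm hxm), by rintro rfl; exact ⟨hm, le_rfl⟩⟩

lemma coverGraph_adj_iff {rk : P → ℕ} {K : ℕ} {a b : P} :
    (coverGraph rk K).Adj a b ↔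
      a ≠ b ∧ rk a = K ∧ rk b = K ∧ ∃ v, a ⋖ v ∧ b ⋖ v :=
  Iff.rfl

end

lemma le_vineRank {P : Type*} [Finite P] (rk : P → ℕ) (x : P) : rk x ≤ vineRank rk :=
  le_csSup (Set.finite_range rk).bddAbove (Set.mem_range_self x)

namespace IsVine

variable {P : Type*} [PartialOrder P] [Finite P] {rk : P → ℕ}

lemma one_le_rk_s15 (h : IsVine rk) (x : P) : 1 ≤ rk x := by
  obtain ⟨m, hmx, hm⟩ := exists_minimal_le_of_wellFoundedLT (fun _ => True) x trivial
  rw [minimal_true] at hm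
  rcases hmx.eq_or_lt with rfl | hlt
  · exact (h.rk_min m hm).ge
  · exact (h.rk_min m hm).symm.le.trans (h.rk_strictMono m x hlt).le

lemma isMin_iff_rk_eq_one (h : IsVine rk) {x : P} : IsMin x ↔ rk x = 1 := by
  refine ⟨h.rk_min x, fun hx => ?_⟩
  by_contra hnx
  obtain ⟨y, hy⟩ := not_isMin_iff.1 hnx
  have := h.rk_strictMono y x hy
  have := h.one_le_rk_s15 y
  omega

lemma two_le_rk (h : IsVine rk) {x : P} (hx : ¬ IsMin x) : 2 ≤ rk x := by
  have := h.one_le_rk_s15 x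
  have := mt h.isMin_iff_rk_eq_one.2 hx
  omega

lemma rk_eq_of_covBy_of_covBy (h : IsVine rk) {a b v : P} (hav : a ⋖ v) (hbv : b ⋖ v) :
    rk a = rk b := by
  have := h.rk_covBy a v hav
  have := h.rk_covBy b v hbv
  omega

lemma coverGraph_adj (h : IsVine rk) {K : ℕ} {a b v : P} (hab : a ≠ b) (hav : a ⋖ v)
    (hbv : b ⋖ v) (ha : rk a = K) : (coverGraph rk K).Adj a b :=
  ⟨hab, ha, (h.rk_eq_of_covBy_of_covBy hbv hav).trans ha, v, hav, hbv⟩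

lemma eq_of_covBy_of_covBy (h : IsVine rk) {a b v w : P} (hab : a ≠ b) (hav : a ⋖ v)
    (hbv : b ⋖ v) (haw : a ⋖ w) (hbw : b ⋖ w) : v = w :=
  h.cover_unique a b hab (h.rk_eq_of_covBy_of_covBy hav hbv) v w hav hbv haw hbw

lemma eq_or_eq_of_covBy (h : IsVine rk) {a b v x : P} (hab : a ≠ b) (hav : a ⋖ v)
    (hbv : b ⋖ v) (hxv : x ⋖ v) : x = a ∨ x = b := by
  by_contra! hx
  have hsub : ({x, a, b} : Set P) ⊆ {y | y ⋖ v} := by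
    simp [Set.insert_subset_iff, hxv, hav, hbv]
  have := Set.ncard_le_ncard hsub
  rw [Set.ncard_eq_three.2 ⟨x, a, b, hx.1, hx.2, hab, rfl⟩,
    h.covers_two v hav.lt.not_isMin] at this
  omega

lemma exists_ne_covBy (h : IsVine rk) {c v : P} (hcv : c ⋖ v) : ∃ d, d ≠ c ∧ d ⋖ v := by
  obtain ⟨d, hdv, hdc⟩ := Set.exists_ne_of_one_lt_ncard (s := {a : P | a ⋖ v})
    (by rw [h.covers_two v hcv.lt.not_isMin]; omega) c
  exact ⟨d, hdc, hdv⟩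

lemma exists_covBy_pair_s15 (h : IsVine rk) {v : P} (hv : ¬ IsMin v) :
    ∃ a b, a ≠ b ∧ a ⋖ v ∧ b ⋖ v := by
  obtain ⟨a, hav⟩ := exists_covBy_of_wellFoundedGT hv
  obtain ⟨b, hba, hbv⟩ := h.exists_ne_covBy hav
  exact ⟨a, b, hba.symm, hav, hbv⟩

lemma completeUnion_eq_union (h : IsVine rk) {a b v : P} (hab : a ≠ b) (hav : a ⋖ v)
    (hbv : b ⋖ v) : completeUnion v = completeUnion a ∪ completeUnion b := by
  ext m
  refine ⟨fun ⟨hm, hmv⟩ => ?_, ?_⟩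
  · obtain ⟨d, hmd, hdv⟩ := hm.exists_le_covBy hmv hav.lt.not_isMin
    rcases h.eq_or_eq_of_covBy hab hav hbv hdv with rfl | rfl
    · exact Or.inl ⟨hm, hmd⟩
    · exact Or.inr ⟨hm, hmd⟩
  · rintro (⟨hm, hma⟩ | ⟨hm, hmb⟩)
    · exact ⟨hm, hma.trans hav.le⟩
    · exact ⟨hm, hmb.trans hbv.le⟩

lemma conditionedSet_eq_symmDiff (h : IsVine rk) {a b v : P} (hab : a ≠ b) (hav : a ⋖ v)
    (hbv : b ⋖ v) : conditionedSet v = completeUnion a ∆ completeUnion b := by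
  ext m
  simp only [conditionedSet, Set.mem_symmDiff, completeUnion, Set.mem_ofPred_eq]
  constructor
  · rintro ⟨hm, d, ⟨hdv, hmd⟩, hd⟩
    rcases h.eq_or_eq_of_covBy hab hav hbv hdv with rfl | rfl
    · exact Or.inl ⟨⟨hm, hmd⟩, fun hmb => hab (hd b ⟨hbv, hmb.2⟩).symm⟩
    · exact Or.inr ⟨⟨hm, hmd⟩, fun hma => hab (hd a ⟨hav, hma.2⟩)⟩
  · rintro (⟨⟨hm, hma⟩, hmb⟩ | ⟨⟨hm, hmb⟩, hma⟩)
    · refine ⟨hm, a, ⟨hav, hma⟩, fun x ⟨hxv, hmx⟩ => ?_⟩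
      rcases h.eq_or_eq_of_covBy hab hav hbv hxv with rfl | rfl
      · rfl
      · exact absurd ⟨hm, hmx⟩ hmb
    · refine ⟨hm, b, ⟨hbv, hmb⟩, fun x ⟨hxv, hmx⟩ => ?_⟩
      rcases h.eq_or_eq_of_covBy hab hav hbv hxv with rfl | rfl
      · exact absurd ⟨hm, hmx⟩ hma
      · rfl

lemma exists_walk_of_covBy (h : IsVine rk) {K : ℕ} {c c' v : P} (hc : c ⋖ v) (hc' : c' ⋖ v)
    (hK : rk c = K) :
    ∃ r : (coverGraph rk K).Walk c c', ∀ a b, s(a, b) ∈ r.edges → a ⋖ v ∧ b ⋖ v := by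
  rcases eq_or_ne c c' with rfl | hne
  · exact ⟨.nil, by simp⟩
  · refine ⟨.cons (h.coverGraph_adj hne hc hc' hK) .nil, fun a b hab => ?_⟩
    simp only [Walk.edges_cons, Walk.edges_nil, List.mem_singleton, Sym2.eq_iff] at hab
    rcases hab with ⟨rfl, rfl⟩ | ⟨rfl, rfl⟩
    · exact ⟨hc, hc'⟩
    · exact ⟨hc', hc⟩

end IsVine

namespace IsRVine

variable {P : Type*} [PartialOrder P] [Finite P] {rk : P → ℕ}

lemma exists_covBy_covBy (h : IsRVine rk) {a b v : P} (hab : a ≠ b) (hav : a ⋖ v)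
    (hbv : b ⋖ v) (ha : ¬ IsMin a) : ∃ c, c ⋖ a ∧ c ⋖ b :=
  h.proximity a b hab (h.rk_eq_of_covBy_of_covBy hav hbv) (h.two_le_rk ha) ⟨v, hav, hbv⟩

lemma reachable (h : IsRVine rk) {K : ℕ} {a b : P} (ha : rk a = K) (hb : rk b = K) :
    (coverGraph rk K).Reachable a b := by
  subst ha
  exact ((h.tree _ (h.one_le_rk_s15 a) (le_vineRank rk a)).preconnected ⟨a, rfl⟩ ⟨b, hb⟩).map
    (Embedding.induce _).toHom

/-- Consecutive vertices of `q` have a common child by proximity; these common children,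
together with `c` and `y`, form the walk. -/
lemma exists_lower_walk (h : IsRVine rk) {K : ℕ} {v w : P}
    (q : (coverGraph rk (K + 1)).Walk v w) {c y : P} (hc : c ⋖ v) (hy : y ⋖ w)
    (hcK : rk c = K) :
    ∃ r : (coverGraph rk K).Walk c y, ∀ a b, s(a, b) ∈ r.edges →
      ∃ z ∈ q.support, a ⋖ z ∧ b ⋖ z := by
  induction q generalizing c with
  | nil =>
    obtain ⟨r, hr⟩ := h.exists_walk_of_covBy hc hy hcK
    exact ⟨r, fun a b hab => ⟨_, by simp, hr a b hab⟩⟩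
  | @cons v v' w hadj q ih =>
    obtain ⟨hne, -, -, V, hvV, hv'V⟩ := coverGraph_adj_iff.1 hadj
    obtain ⟨c', hc'v, hc'v'⟩ := h.exists_covBy_covBy hne hvV hv'V hc.lt.not_isMin
    obtain ⟨r₀, hr₀⟩ := h.exists_walk_of_covBy hc hc'v hcK
    obtain ⟨r, hr⟩ := ih hc'v' hy ((h.rk_eq_of_covBy_of_covBy hc'v hc).trans hcK)
    refine ⟨r₀.append r, fun a b hab => ?_⟩
    rw [Walk.edges_append, List.mem_append] at hab
    rcases hab with hab | hab
    · exact ⟨v, by simp, hr₀ a b hab⟩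
    · obtain ⟨z, hz, hza⟩ := hr a b hab
      exact ⟨z, by simp [hz], hza⟩

/-- If the common child `c` of the first two vertices of `p` were not `y`, the forest one level
down would force the edge `c - y` onto the walk of children of the rest of `p`; the vertex
covering both would then be the first vertex of `p` again, as common parents are unique. -/
lemma covBy_of_mem_support (h : IsRVine rk) {K : ℕ} {u w y : P}
    {p : (coverGraph rk K).Walk u w} (hp : p.IsPath) (hyu : y ⋖ u) (hyw : y ⋖ w) {z : P}
    (hz : z ∈ p.support) : y ⋖ z := by
  induction p with
  | nil => exact (List.mem_singleton.1 hz) ▸ hyu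
  | @cons u v w hadj q ih =>
    obtain ⟨hne, hu, -, V, huV, hvV⟩ := coverGraph_adj_iff.1 hadj
    rw [Walk.cons_isPath_iff] at hp
    obtain ⟨c, hcu, hcv⟩ := h.exists_covBy_covBy hne huV hvV hyu.lt.not_isMin
    obtain rfl : K = rk y + 1 := hu ▸ h.rk_covBy y u hyu
    obtain rfl : c = y := by
      by_contra hcy
      obtain ⟨r, hr⟩ := h.exists_lower_walk q hcv hyw (h.rk_eq_of_covBy_of_covBy hcu hyu)
      obtain ⟨z, hzq, hcz, hyz⟩ :=
        hr c y ((h.forest _).mem_edges_of_adj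
          (h.coverGraph_adj hcy hcu hyu (h.rk_eq_of_covBy_of_covBy hcu hyu)) r)
      exact hp.2 (h.eq_of_covBy_of_covBy hcy hcu hyu hcz hyz ▸ hzq)
    rcases List.mem_cons.1 hz with rfl | hz
    · exact hyu
    · exact ih hp.1 hcv hyw hz

lemma exists_walk_covBy (h : IsRVine rk) {K : ℕ} {y a b : P} (ha : y ⋖ a) (hb : y ⋖ b)
    (hK : rk a = K) : ∃ p : (coverGraph rk K).Walk a b, ∀ z ∈ p.support, y ⋖ z := by
  obtain ⟨p, hp⟩ := (h.reachable (b := b) hK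
    (by rw [← hK, h.rk_covBy y a ha, h.rk_covBy y b hb])).exists_isPath
  exact ⟨p, fun z hz => h.covBy_of_mem_support hp ha hb hz⟩

lemma exists_upper_walk_le (h : IsRVine rk) {K : ℕ} {m a₀ b₀ : P}
    (p₀ : (coverGraph rk K).Walk a₀ b₀) (hK : rk a₀ = K)
    (hp₀ : ∀ z ∈ p₀.support, m ≤ z)
    {a b : P} (ha : a₀ ⋖ a) (hb : b₀ ⋖ b) :
    ∃ p : (coverGraph rk (K + 1)).Walk a b, ∀ z ∈ p.support, m ≤ z := by
  induction p₀ generalizing a with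
  | nil =>
    obtain ⟨p, hp⟩ := h.exists_walk_covBy ha hb (hK ▸ h.rk_covBy _ a ha)
    exact ⟨p, fun z hz => (hp₀ _ (by simp)).trans (hp z hz).le⟩
  | @cons x y b₀ hadj q ih =>
    obtain ⟨-, hx, hy, V, hxV, hyV⟩ := coverGraph_adj_iff.1 hadj
    obtain ⟨p₁, hp₁⟩ := h.exists_walk_covBy ha hxV (hK ▸ h.rk_covBy _ a ha)
    obtain ⟨p₂, hp₂⟩ := ih hy (fun z hz => hp₀ z (by simp [hz])) hyV hb
    refine ⟨p₁.append p₂, fun z hz => ?_⟩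
    rcases (Walk.mem_support_append_iff _ _).1 hz with hz | hz
    · exact (hp₀ x (by simp)).trans (hp₁ z hz).le
    · exact hp₂ z hz

lemma exists_walk_le (h : IsRVine rk) {m : P} (hm : IsMin m) {K : ℕ} {a b : P}
    (ha : rk a = K) (hb : rk b = K) (hma : m ≤ a) (hmb : m ≤ b) :
    ∃ p : (coverGraph rk K).Walk a b, ∀ z ∈ p.support, m ≤ z := by
  induction K generalizing a b with
  | zero => have := h.one_le_rk_s15 a; omega
  | succ K ih =>
    have hba : IsMin b ↔ IsMin a := by rw [h.isMin_iff_rk_eq_one, h.isMin_iff_rk_eq_one, ha, hb]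
    by_cases ha' : IsMin a
    · obtain rfl := le_antisymm hma (ha' hma)
      obtain rfl := le_antisymm hmb (hba.2 ha' hmb)
      exact ⟨.nil, by simp⟩
    · have hb' : ¬ IsMin b := mt hba.1 ha'
      obtain ⟨a₀, hma₀, ha₀⟩ := hm.exists_le_covBy hma ha'
      obtain ⟨b₀, hmb₀, hb₀⟩ := hm.exists_le_covBy hmb hb'
      have ha₀K : rk a₀ = K := by have := h.rk_covBy _ _ ha₀; omega
      have hb₀K : rk b₀ = K := by have := h.rk_covBy _ _ hb₀; omega
      obtain ⟨p₀, hp₀⟩ := ih ha₀K hb₀K hma₀ hmb₀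
      exact h.exists_upper_walk_le p₀ ha₀K hp₀ ha₀ hb₀

/-- Otherwise `m` lies below the other children `a'` of `a` and `b'` of `b`, and a walk above
`m` from `a'` to `b'` would avoid `c`, although the forest has the path `a' - c - b'`. -/
lemma le_of_covBy_of_covBy (h : IsRVine rk) {m a b c : P} (hm : IsMin m) (hab : a ≠ b)
    (hca : c ⋖ a) (hcb : c ⋖ b) (hma : m ≤ a) (hmb : m ≤ b) : m ≤ c := by
  by_contra hmc
  have le_other_child : ∀ {x x'}, c ⋖ x → x' ≠ c → x' ⋖ x → m ≤ x → m ≤ x' := by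
    intro x x' hcx hx'c hx'x hmx
    obtain ⟨d, hmd, hdx⟩ := hm.exists_le_covBy hmx hcx.lt.not_isMin
    rcases h.eq_or_eq_of_covBy hx'c.symm hcx hx'x hdx with rfl | rfl
    · exact absurd hmd hmc
    · exact hmd
  obtain ⟨a', ha'c, ha'⟩ := h.exists_ne_covBy hca
  obtain ⟨b', hb'c, hb'⟩ := h.exists_ne_covBy hcb
  have ha'b' : a' ≠ b' := by
    rintro rfl
    exact hab (h.eq_of_covBy_of_covBy ha'c.symm hca ha' hcb hb')
  obtain ⟨p, hp⟩ := h.exists_walk_le hm (h.rk_eq_of_covBy_of_covBy ha' hca)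
    (h.rk_eq_of_covBy_of_covBy hb' hcb) (le_other_child hca ha'c ha' hma)
    (le_other_child hcb hb'c hb' hmb)
  exact hmc (hp c ((h.forest _).mem_support_of_adj_of_adj
    (h.coverGraph_adj ha'c ha' hca (h.rk_eq_of_covBy_of_covBy ha' hca))
    (h.coverGraph_adj hb'c.symm hcb hb' rfl) ha'b' p))

lemma completeUnion_inter (h : IsRVine rk) {a b c : P} (hab : a ≠ b) (hca : c ⋖ a)
    (hcb : c ⋖ b) : completeUnion a ∩ completeUnion b = completeUnion c := by
  ext m
  exact ⟨fun ⟨⟨hm, hma⟩, _, hmb⟩ =>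
      ⟨hm, h.le_of_covBy_of_covBy hm hab hca hcb hma hmb⟩,
    fun ⟨hm, hmc⟩ => ⟨⟨hm, hmc.trans hca.le⟩, hm, hmc.trans hcb.le⟩⟩

theorem ncard_completeUnion (h : IsRVine rk) (v : P) : (completeUnion v).ncard = rk v := by
  induction hK : rk v using Nat.strong_induction_on generalizing v with
  | _ K ih =>
  by_cases hv : IsMin v
  · rw [completeUnion_of_isMin hv, Set.ncard_singleton, ← hK, h.rk_min v hv]
  obtain ⟨a, b, hab, hav, hbv⟩ := h.exists_covBy_pair_s15 hv
  have ha := h.rk_covBy a v hav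
  have hb := h.rk_covBy b v hbv
  have hinter : (completeUnion a ∩ completeUnion b).ncard + 1 = rk a := by
    by_cases ha' : IsMin a
    · have hb' : IsMin b := h.isMin_iff_rk_eq_one.2 (by rw [← h.rk_min a ha']; omega)
      rw [completeUnion_of_isMin ha', completeUnion_of_isMin hb',
        Set.singleton_inter_eq_empty.2 (Set.notMem_singleton_iff.2 hab), Set.ncard_empty,
        h.rk_min a ha']
    · obtain ⟨c, hca, hcb⟩ := h.exists_covBy_covBy hab hav hbv ha'
      rw [h.completeUnion_inter hab hca hcb, ih (rk c) (by have := h.rk_covBy c a hca; omega)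
        c rfl, h.rk_covBy c a hca]
  have := Set.ncard_union_add_ncard_inter (completeUnion a) (completeUnion b)
  rw [← h.completeUnion_eq_union hab hav hbv, ih (rk a) (by omega) a rfl,
    ih (rk b) (by omega) b rfl] at this
  omega

lemma ncard_completeUnion_diff (h : IsRVine rk) {a b v : P} (hab : a ≠ b) (hav : a ⋖ v)
    (hbv : b ⋖ v) : (completeUnion a \ completeUnion b).ncard = 1 := by
  have := Set.ncard_union_eq (s := completeUnion b) (t := completeUnion a \ completeUnion b)
    Set.disjoint_sdiff_right
  rw [Set.union_sdiff_self, ← h.completeUnion_eq_union hab.symm hbv hav, h.ncard_completeUnion,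
    h.ncard_completeUnion, h.rk_covBy b v hbv] at this
  omega

lemma completeUnion_diff_eq_singleton (h : IsRVine rk) {a b v i : P} (hab : a ≠ b)
    (hav : a ⋖ v) (hbv : b ⋖ v) (hi : i ∈ completeUnion a \ completeUnion b) :
    completeUnion a \ completeUnion b = {i} := by
  obtain ⟨x, hx⟩ := Set.ncard_eq_one.1 (h.ncard_completeUnion_diff hab hav hbv)
  have hix : i ∈ ({x} : Set P) := hx ▸ hi
  rw [hx, Set.mem_singleton_iff.1 hix]

theorem exists_conditionedSet_eq_pair (h : IsRVine rk) {v : P} (hv : ¬ IsMin v) :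
    ∃ i j, IsMin i ∧ IsMin j ∧ i ≠ j ∧ conditionedSet v = {i, j} := by
  obtain ⟨a, b, hab, hav, hbv⟩ := h.exists_covBy_pair_s15 hv
  obtain ⟨i, hi⟩ := Set.ncard_eq_one.1 (h.ncard_completeUnion_diff hab hav hbv)
  obtain ⟨j, hj⟩ := Set.ncard_eq_one.1 (h.ncard_completeUnion_diff hab.symm hbv hav)
  have hi' : i ∈ completeUnion a \ completeUnion b := hi ▸ rfl
  have hj' : j ∈ completeUnion b \ completeUnion a := hj ▸ rfl
  refine ⟨i, j, hi'.1.1, hj'.1.1, fun hij => hj'.2 (hij ▸ hi'.1), ?_⟩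
  rw [h.conditionedSet_eq_symmDiff hab hav hbv, Set.symmDiff_def, hi, hj, Set.singleton_union]

theorem conditionedSet_eq_pair_iff (h : IsRVine rk) {i j v : P} (hi : IsMin i) (hj : IsMin j)
    (hij : i ≠ j) : conditionedSet v = {i, j} ↔ Minimal (fun x => i ≤ x ∧ j ≤ x) v := by
  constructor
  · intro hC
    have hiC : i ∈ conditionedSet v := hC ▸ Set.mem_insert i {j}
    have hjC : j ∈ conditionedSet v := hC ▸ Set.mem_insert_of_mem i rfl
    obtain ⟨a, ⟨hav, hia⟩, -⟩ := hiC.2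
    obtain ⟨b, ⟨hbv, hjb⟩, -⟩ := hjC.2
    refine ⟨⟨hia.trans hav.le, hjb.trans hbv.le⟩, fun x ⟨hix, hjx⟩ hxv => ?_⟩
    by_contra hvx
    obtain ⟨d, hxd, hdv⟩ := exists_le_covBy_of_lt (lt_of_le_not_ge hxv hvx)
    obtain ⟨d', hd'd, hd'v⟩ := h.exists_ne_covBy hdv
    have hdiff :
        ∀ k ∈ conditionedSet v, k ≤ d → k ∈ completeUnion d \ completeUnion d' := by
      rw [h.conditionedSet_eq_symmDiff hd'd.symm hdv hd'v]
      rintro k (hk | hk) hkd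
      · exact hk
      · exact absurd ⟨hk.1.1, hkd⟩ hk.2
    have := h.completeUnion_diff_eq_singleton hd'd.symm hdv hd'v (hdiff i hiC (hix.trans hxd))
    exact hij (this ▸ hdiff j hjC (hjx.trans hxd)).symm
  · rintro ⟨⟨hiv, hjv⟩, hmin⟩
    have hv := not_isMin_of_le_of_le hij hiv hjv
    obtain ⟨a, hia, hav⟩ := hi.exists_le_covBy hiv hv
    obtain ⟨b, hjb, hbv⟩ := hj.exists_le_covBy hjv hv
    have not_both : ∀ d, d ⋖ v → ¬ (i ≤ d ∧ j ≤ d) :=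
      fun d hdv hd => hdv.lt.not_ge (hmin hd hdv.le)
    have hab : a ≠ b := by
      rintro rfl
      exact not_both a hav ⟨hia, hjb⟩
    rw [h.conditionedSet_eq_symmDiff hab hav hbv, Set.symmDiff_def,
      h.completeUnion_diff_eq_singleton hab hav hbv
        ⟨⟨hi, hia⟩, fun hib => not_both b hbv ⟨hib.2, hjb⟩⟩,
      h.completeUnion_diff_eq_singleton hab.symm hbv hav
        ⟨⟨hj, hjb⟩, fun hja => not_both a hav ⟨hia, hja.2⟩⟩,
      Set.singleton_union]

lemma exists_completeUnion_eq (h : IsRVine rk) [Nonempty P] :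
    ∃ t, completeUnion t = {x : P | IsMin x} := by
  obtain ⟨t, ht⟩ := Nat.sSup_mem (Set.range_nonempty rk) (Set.finite_range rk).bddAbove
  refine ⟨t, Set.eq_of_subset_of_ncard_le (fun m hm => hm.1) ?_⟩
  rw [h.ncard_completeUnion t, ht]
  exact h.rank_eq_dim.ge

lemma exists_minimal_upperBound (h : IsRVine rk) {i j : P} (hi : IsMin i) (hj : IsMin j) :
    ∃ v, Minimal (fun x => i ≤ x ∧ j ≤ x) v := by
  have : Nonempty P := ⟨i⟩
  obtain ⟨t, ht⟩ := h.exists_completeUnion_eq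
  have hit : i ∈ completeUnion t := ht ▸ hi
  have hjt : j ∈ completeUnion t := ht ▸ hj
  obtain ⟨v, -, hv⟩ :=
    exists_minimal_le_of_wellFoundedLT (fun x => i ≤ x ∧ j ≤ x) t ⟨hit.2, hjt.2⟩
  exact ⟨v, hv⟩

lemma exists_covBy_of_rk_eq (h : IsRVine rk) {a x y : P} (hay : a ⋖ y) (hx : rk x = rk a) :
    ∃ z, x ⋖ z := by
  obtain ⟨b, hba, hby⟩ := h.exists_ne_covBy hay
  obtain ⟨w, hwx, hw⟩ : ∃ w, w ≠ x ∧ rk w = rk x := by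
    rcases eq_or_ne a x with rfl | hax
    · exact ⟨b, hba, h.rk_eq_of_covBy_of_covBy hby hay⟩
    · exact ⟨a, hax, hx.symm⟩
  obtain ⟨p⟩ := h.reachable rfl hw
  obtain ⟨-, -, -, z, hxz, -⟩ := coverGraph_adj_iff.1 (p.adj_snd (Walk.not_nil_of_ne hwx.symm))
  exact ⟨z, hxz⟩

lemma exists_le_rk_eq (h : IsRVine rk) {x y : P} (hxy : rk x ≤ rk y) :
    ∃ z, x ≤ z ∧ rk z = rk y := by
  induction hK : rk y generalizing y with
  | zero => have := h.one_le_rk_s15 y; omega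
  | succ K ih =>
    rcases hxy.eq_or_lt with hxy | hxy
    · exact ⟨x, le_rfl, hxy.trans hK⟩
    have hy : ¬ IsMin y := fun hy => by have := h.rk_min y hy; have := h.one_le_rk_s15 x; omega
    obtain ⟨a, hay⟩ := exists_covBy_of_wellFoundedGT hy
    have ha : rk a = K := by have := h.rk_covBy a y hay; omega
    obtain ⟨z', hxz', hz'⟩ := ih (y := a) (by omega) ha
    obtain ⟨z, hz'z⟩ := h.exists_covBy_of_rk_eq hay (hz'.trans ha.symm)
    exact ⟨z, hxz'.trans hz'z.le, by have := h.rk_covBy z' z hz'z; omega⟩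

lemma eq_of_minimal_of_rk_eq (h : IsRVine rk) {i j u z : P} (hi : IsMin i) (hj : IsMin j)
    (hij : i ≠ j) (hu : Minimal (fun x => i ≤ x ∧ j ≤ x) u) (hz : i ≤ z ∧ j ≤ z)
    (hrk : rk z = rk u) : z = u := by
  classical
  by_contra hzu
  obtain ⟨p, hp⟩ := h.exists_walk_le hi rfl hrk hu.1.1 hz.1
  obtain ⟨q, hq⟩ := h.exists_walk_le hj rfl hrk hu.1.2 hz.2
  have hpq : p.bypass = q.bypass := congrArg Subtype.val <|
    (h.forest _).subsingleton_path u z |>.elim ⟨_, p.bypass_isPath⟩ ⟨_, q.bypass_isPath⟩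
  have hx : p.bypass.snd ∈ p.bypass.support := p.bypass.getVert_mem_support 1
  have hix := hp _ (p.support_bypass_subset_support hx)
  have hjx := hq _ (q.support_bypass_subset_support (by rw [← hpq]; exact hx))
  obtain ⟨hux, -, -, V, huV, hxV⟩ :=
    coverGraph_adj_iff.1 (p.bypass.adj_snd (Walk.not_nil_of_ne (Ne.symm hzu)))
  obtain ⟨c, hcu, hcx⟩ :=
    h.exists_covBy_covBy hux huV hxV (not_isMin_of_le_of_le hij hu.1.1 hu.1.2)
  have hc : i ≤ c ∧ j ≤ c :=
    ⟨h.le_of_covBy_of_covBy hi hux hcu hcx hu.1.1 hix,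
      h.le_of_covBy_of_covBy hj hux hcu hcx hu.1.2 hjx⟩
  exact hcu.lt.not_ge (hu.2 hc hcu.le)

lemma eq_of_minimal_of_minimal (h : IsRVine rk) {i j u v : P} (hi : IsMin i) (hj : IsMin j)
    (hij : i ≠ j) (hu : Minimal (fun x => i ≤ x ∧ j ≤ x) u)
    (hv : Minimal (fun x => i ≤ x ∧ j ≤ x) v) : u = v := by
  wlog hle : rk u ≤ rk v generalizing u v
  · exact (this hv hu (le_of_not_ge hle)).symm
  obtain ⟨z, huz, hz⟩ := h.exists_le_rk_eq hle
  obtain rfl : z = v :=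
    h.eq_of_minimal_of_rk_eq hi hj hij hv ⟨hu.1.1.trans huz, hu.1.2.trans huz⟩ hz
  exact le_antisymm huz (hv.2 hu.1 huz)

end IsRVine

/-- In an R-vine, the map `v ↦ C_v` is a bijection from the non-minimal nodes to the
two-element subsets of the set of minimal nodes: every non-minimal node has a
two-element conditioned set of minimal nodes, and for every pair of distinct minimal
nodes `i, j` there is exactly one non-minimal node whose conditioned set is `{i, j}`. -/
theorem conditionedSet_bijection {P : Type*} [PartialOrder P] [Finite P]
    (rk : P → ℕ) (h : IsRVine rk) :
    (∀ v : P, ¬ IsMin v → ∃ i j : P, IsMin i ∧ IsMin j ∧ i ≠ j ∧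
      conditionedSet v = {i, j}) ∧
    (∀ i j : P, IsMin i → IsMin j → i ≠ j →
      ∃! v : P, ¬ IsMin v ∧ conditionedSet v = {i, j}) := by
  refine ⟨fun v hv => h.exists_conditionedSet_eq_pair hv, fun i j hi hj hij => ?_⟩
  obtain ⟨v, hv⟩ := h.exists_minimal_upperBound hi hj
  refine ⟨v, ⟨not_isMin_of_le_of_le hij hv.1.1 hv.1.2,
    (h.conditionedSet_eq_pair_iff hi hj hij).2 hv⟩, fun w ⟨_, hw⟩ => ?_⟩
  exact h.eq_of_minimal_of_minimal hi hj hij ((h.conditionedSet_eq_pair_iff hi hj hij).1 hw) hv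
end
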